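/- For every integer m ≥ 3 divisible by 4, χ'_st(C_m □ P_2) = 4; that is, the prism over a cycle of length divisible by 4 has star chromatic index exactly 4. -/

import Mathlib

/-!
With three colors, a square `a b c d` in which `c` and `d` have further neighbors `c'`, `d'`
cannot be star edge-colored: either the square itself or one of the paths `b a d c c'`,
`c b a d d'` is colored `x y x y`; with fewer colors the square alone is bichromatic. Every
prism over a cycle of length at least three contains such a square.

Conversely, for 4 ∣ m, reducing the cycle coordinate mod 4 is a covering of the cube
`Q₃ = C₄ □ P₂`. A proper edge-coloring is a star coloring iff no non-backtracking walk of
length four is colored `x y x y`, and both conditions only see the neighborhoods of vertices,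
so star edge-colorings pull back along coverings; `Q₃` has an explicit star 4-edge-coloring.
-/

open SimpleGraph

/-- A star edge-coloring with `k` colors: a proper edge-coloring (adjacent edges get distinct
colors) such that no path with four edges and no cycle with four edges is bichromatic. -/
def IsStarEdgeColoring {V : Type*} (G : SimpleGraph V) {k : ℕ} (C : Sym2 V → Fin k) : Prop :=
  (∀ e₁ ∈ G.edgeSet, ∀ e₂ ∈ G.edgeSet, e₁ ≠ e₂ → (∃ v, v ∈ e₁ ∧ v ∈ e₂) → C e₁ ≠ C e₂) ∧
  (∀ (u v : V) (w : G.Walk u v), w.length = 4 → w.IsPath →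
    ¬ ∃ a b : Fin k, ∀ e ∈ w.edges, C e = a ∨ C e = b) ∧
  (∀ (u : V) (w : G.Walk u u), w.length = 4 → w.IsCycle →
    ¬ ∃ a b : Fin k, ∀ e ∈ w.edges, C e = a ∨ C e = b)

/-- The star chromatic index: the least `k` admitting a star edge-coloring with `k` colors. -/
noncomputable def starChromaticIndex {V : Type*} (G : SimpleGraph V) : ℕ :=
  sInf {k | ∃ C : Sym2 V → Fin k, IsStarEdgeColoring G C}

namespace SimpleGraph

variable {V W V' W' : Type*} {G : SimpleGraph V} {H : SimpleGraph W}
  {G' : SimpleGraph V'} {H' : SimpleGraph W'}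

lemma Walk.eq_cons_of_length_eq_four {u v : V} (w : G.Walk u v) (hw : w.length = 4) :
    ∃ (x y z : V) (h₁ : G.Adj u x) (h₂ : G.Adj x y) (h₃ : G.Adj y z) (h₄ : G.Adj z v),
      w = .cons h₁ (.cons h₂ (.cons h₃ (.cons h₄ .nil))) := by
  match w, hw with
  | .cons h₁ (.cons h₂ (.cons h₃ (.cons h₄ .nil))), _ => exact ⟨_, _, _, h₁, h₂, h₃, h₄, rfl⟩

instance {n : ℕ} : DecidableRel (pathGraph n).Adj :=
  fun _ _ => decidable_of_iff _ pathGraph_adj.symm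

instance [DecidableEq V] [DecidableEq W] [DecidableRel G.Adj] [DecidableRel H.Adj] :
    DecidableRel (G □ H).Adj :=
  fun _ _ => decidable_of_iff _ boxProd_adj.symm

def Hom.IsLocallyInjective (f : G →g H) : Prop :=
  ∀ v, Set.InjOn f (G.neighborSet v)

lemma Hom.isLocallyInjective_id : (Hom.id : G →g G).IsLocallyInjective :=
  fun _ => Function.injective_id.injOn

def Hom.boxProdMap (f : G →g G') (g : H →g H') : (G □ H) →g (G' □ H') where
  toFun := Prod.map f g
  map_rel' {x y} h := by
    rw [boxProd_adj] at h ⊢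
    exact h.imp (fun ⟨h₁, h₂⟩ => ⟨f.map_adj h₁, congrArg g h₂⟩)
      (fun ⟨h₁, h₂⟩ => ⟨g.map_adj h₁, congrArg f h₂⟩)

lemma Hom.IsLocallyInjective.boxProdMap {f : G →g G'} {g : H →g H'}
    (hf : f.IsLocallyInjective) (hg : g.IsLocallyInjective) :
    (f.boxProdMap g).IsLocallyInjective := by
  rintro ⟨a, b⟩ ⟨a₁, b₁⟩ h₁ ⟨a₂, b₂⟩ h₂ heq
  simp only [mem_neighborSet, boxProd_adj] at h₁ h₂
  simp only [Hom.boxProdMap, RelHom.coeFn_mk, Prod.map, Prod.mk.injEq] at heq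
  rcases h₁ with ⟨h₁, rfl⟩ | ⟨h₁, rfl⟩ <;> rcases h₂ with ⟨h₂, rfl⟩ | ⟨h₂, rfl⟩
  · rw [hf a h₁ h₂ heq.1]
  · exact absurd heq.1 (f.map_adj h₁).ne'
  · exact absurd heq.1 (f.map_adj h₂).ne
  · rw [hg b h₁ h₂ heq.2]

section CycleCover

open Fin.CommRing

def cycleGraphCover {m n : ℕ} (h : n + 2 ∣ m + 2) :
    cycleGraph (m + 2) →g cycleGraph (n + 2) where
  toFun := ZMod.castHom h (Fin (n + 2))
  map_rel' {u v} huv := by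
    have hsub : ∀ a b : ZMod (m + 2), a - b = 1 →
        ZMod.castHom h (Fin (n + 2)) a - ZMod.castHom h (Fin (n + 2)) b = 1 := fun a b hab => by
      rw [← map_sub, hab, map_one]
    exact huv.imp (hsub u v) (hsub v u)

lemma isLocallyInjective_cycleGraphCover {m n : ℕ} (h : n + 2 ∣ m + 2)
    (hn : (2 : Fin (n + 2)) ≠ 0) : (cycleGraphCover h).IsLocallyInjective := by
  have hne : ∀ a : ZMod (m + 2),
      ZMod.castHom h (Fin (n + 2)) (a - 1) ≠ ZMod.castHom h _ (a + 1) := by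
    intro a ha
    apply hn
    rw [map_sub, map_add, map_one] at ha
    calc (2 : Fin (n + 2)) = (ZMod.castHom h _ a + 1) - (ZMod.castHom h _ a - 1) := by ring
      _ = 0 := by rw [← ha, sub_self]
  intro v
  rw [cycleGraph_neighborSet]
  rintro x (rfl | rfl) y (rfl | rfl) hxy
  · rfl
  · exact absurd hxy (hne v)
  · exact absurd hxy.symm (hne v)
  · rfl

end CycleCover

end SimpleGraph

section Coloring

variable {V W : Type*} {G : SimpleGraph V} {H : SimpleGraph W} {k : ℕ}

def IsProperEdgeColoring (G : SimpleGraph V) {α : Type*} (C : Sym2 V → α) : Prop :=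
  ∀ ⦃u v w⦄, G.Adj u v → G.Adj v w → u ≠ w → C s(u, v) ≠ C s(v, w)

/-- The vertices are quantified one at a time so that deciding this on a finite graph only
enumerates walks. -/
def IsAlternatingFree (G : SimpleGraph V) {α : Type*} (C : Sym2 V → α) : Prop :=
  ∀ ⦃v₀ v₁⦄, G.Adj v₀ v₁ → ∀ ⦃v₂⦄, G.Adj v₁ v₂ → v₀ ≠ v₂ → ∀ ⦃v₃⦄, G.Adj v₂ v₃ → v₁ ≠ v₃ →
    ∀ ⦃v₄⦄, G.Adj v₃ v₄ → v₂ ≠ v₄ → C s(v₀, v₁) = C s(v₂, v₃) → C s(v₁, v₂) ≠ C s(v₃, v₄)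

lemma isProperEdgeColoring_iff {α : Type*} {C : Sym2 V → α} :
    IsProperEdgeColoring G C ↔
      ∀ e₁ ∈ G.edgeSet, ∀ e₂ ∈ G.edgeSet, e₁ ≠ e₂ → (∃ v, v ∈ e₁ ∧ v ∈ e₂) → C e₁ ≠ C e₂ := by
  constructor
  · rintro hC e₁ he₁ e₂ he₂ hne ⟨v, hv₁, hv₂⟩
    obtain ⟨a, rfl⟩ := Sym2.mem_iff_exists.mp hv₁
    obtain ⟨b, rfl⟩ := Sym2.mem_iff_exists.mp hv₂
    rw [Sym2.eq_swap]
    exact hC (G.adj_symm he₁) he₂ (by rintro rfl; exact hne rfl)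
  · intro hC u v w huv hvw huw
    refine hC _ huv _ hvw ?_ ⟨v, Sym2.mem_mk_right _ _, Sym2.mem_mk_left _ _⟩
    rw [Ne, Sym2.eq_iff]
    rintro (⟨rfl, -⟩ | ⟨rfl, -⟩)
    · exact huv.ne rfl
    · exact huw rfl

lemma eq_of_ne_of_ne_of_mem_pair {α : Type*} {a b x y z : α}
    (hx : x = a ∨ x = b) (hy : y = a ∨ y = b) (hz : z = a ∨ z = b) (hxy : x ≠ y) (hyz : y ≠ z) :
    x = z := by
  rcases hx with rfl | rfl <;> rcases hy with rfl | rfl <;> rcases hz with rfl | rfl <;> tauto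

/-- A non-backtracking walk of length four is a path or a 4-cycle, unless it runs around a
triangle, and then two of its edges that should share a color meet at a vertex. -/
lemma IsStarEdgeColoring.isAlternatingFree {C : Sym2 V → Fin k} (hC : IsStarEdgeColoring G C) :
    IsAlternatingFree G C := by
  intro v₀ v₁ h₁ v₂ h₂ h₀₂ v₃ h₃ h₁₃ v₄ h₄ h₂₄ hac hbd
  have hproper : IsProperEdgeColoring G C := isProperEdgeColoring_iff.2 hC.1
  by_cases h₀₃ : v₀ = v₃
  · subst h₀₃
    exact hproper h₃ h₁ h₂.ne' hac.symm
  by_cases h₁₄ : v₁ = v₄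
  · subst h₁₄
    exact hproper h₄ h₂ h₃.ne' hbd.symm
  have hbi : ∀ e ∈ [s(v₀, v₁), s(v₁, v₂), s(v₂, v₃), s(v₃, v₄)],
      C e = C s(v₀, v₁) ∨ C e = C s(v₁, v₂) := by
    simp [hac, hbd]
  by_cases h₀₄ : v₀ = v₄
  · subst h₀₄
    refine hC.2.2 v₀ (.cons h₁ (.cons h₂ (.cons h₃ (.cons h₄ .nil)))) rfl ?_ ⟨_, _, hbi⟩
    simp [Walk.cons_isCycle_iff, h₁.ne, h₂.ne, h₃.ne, h₄.ne, h₁.ne', h₄.ne', h₀₂, h₁₃, h₂₄]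
  · refine hC.2.1 v₀ v₄ (.cons h₁ (.cons h₂ (.cons h₃ (.cons h₄ .nil)))) rfl ?_ ⟨_, _, hbi⟩
    simp [Walk.isPath_def, h₁.ne, h₂.ne, h₃.ne, h₄.ne, h₀₂, h₁₃, h₂₄, h₀₃, h₁₄, h₀₄]

lemma IsAlternatingFree.not_bichromatic {C : Sym2 V → Fin k} (hp : IsProperEdgeColoring G C)
    (ha : IsAlternatingFree G C) {v₀ v₁ v₂ v₃ v₄ : V}
    (h₁ : G.Adj v₀ v₁) (h₂ : G.Adj v₁ v₂) (h₃ : G.Adj v₂ v₃) (h₄ : G.Adj v₃ v₄)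
    (h₀₂ : v₀ ≠ v₂) (h₁₃ : v₁ ≠ v₃) (h₂₄ : v₂ ≠ v₄) :
    ¬ ∃ a b : Fin k, ∀ e ∈ [s(v₀, v₁), s(v₁, v₂), s(v₂, v₃), s(v₃, v₄)], C e = a ∨ C e = b := by
  rintro ⟨a, b, hab⟩
  simp only [List.mem_cons, List.not_mem_nil, or_false, forall_eq_or_imp, forall_eq] at hab
  obtain ⟨c₁, c₂, c₃, c₄⟩ := hab
  refine ha h₁ h₂ h₀₂ h₃ h₁₃ h₄ h₂₄ ?_ ?_
  · exact eq_of_ne_of_ne_of_mem_pair c₁ c₂ c₃ (hp h₁ h₂ h₀₂) (hp h₂ h₃ h₁₃)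
  · exact eq_of_ne_of_ne_of_mem_pair c₂ c₃ c₄ (hp h₂ h₃ h₁₃) (hp h₃ h₄ h₂₄)

lemma IsProperEdgeColoring.isStarEdgeColoring {C : Sym2 V → Fin k}
    (hp : IsProperEdgeColoring G C) (ha : IsAlternatingFree G C) : IsStarEdgeColoring G C := by
  refine ⟨isProperEdgeColoring_iff.1 hp, ?_, ?_⟩
  · intro u v w hw hpath
    obtain ⟨x, y, z, h₁, h₂, h₃, h₄, rfl⟩ := w.eq_cons_of_length_eq_four hw
    simp only [Walk.isPath_def, Walk.support_cons, Walk.support_nil, List.nodup_cons,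
      List.mem_cons, List.not_mem_nil, or_false, not_or] at hpath
    exact ha.not_bichromatic hp h₁ h₂ h₃ h₄ (by tauto) (by tauto) (by tauto)
  · intro u w hw hcyc
    obtain ⟨x, y, z, h₁, h₂, h₃, h₄, rfl⟩ := w.eq_cons_of_length_eq_four hw
    have hpath := ((Walk.cons_isCycle_iff _ h₁).1 hcyc).1
    simp only [Walk.isPath_def, Walk.support_cons, Walk.support_nil, List.nodup_cons,
      List.mem_cons, List.not_mem_nil, or_false, not_or] at hpath
    exact ha.not_bichromatic hp h₁ h₂ h₃ h₄ (by tauto) (by tauto) (by tauto)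

theorem isStarEdgeColoring_iff {C : Sym2 V → Fin k} :
    IsStarEdgeColoring G C ↔ IsProperEdgeColoring G C ∧ IsAlternatingFree G C :=
  ⟨fun hC => ⟨isProperEdgeColoring_iff.2 hC.1, hC.isAlternatingFree⟩,
    fun ⟨hp, ha⟩ => hp.isStarEdgeColoring ha⟩

theorem IsStarEdgeColoring.comap {f : G →g H} (hf : f.IsLocallyInjective) {C : Sym2 W → Fin k}
    (hC : IsStarEdgeColoring H C) : IsStarEdgeColoring G (C ∘ Sym2.map f) := by
  obtain ⟨hproper, halt⟩ := isStarEdgeColoring_iff.1 hC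
  refine isStarEdgeColoring_iff.2 ⟨fun a b c ha hb hab => ?_,
    fun v₀ v₁ h₁ v₂ h₂ h₀₂ v₃ h₃ h₁₃ v₄ h₄ h₂₄ => ?_⟩
  · exact hproper (f.map_adj ha) (f.map_adj hb) fun h => hab (hf b ha.symm hb h)
  · exact halt (f.map_adj h₁) (f.map_adj h₂) (fun h => h₀₂ (hf v₁ h₁.symm h₂ h))
      (f.map_adj h₃) (fun h => h₁₃ (hf v₂ h₂.symm h₃ h))
      (f.map_adj h₄) (fun h => h₂₄ (hf v₃ h₃.symm h₄ h))

theorem IsStarEdgeColoring.four_le_of_square {C : Sym2 V → Fin k} (hC : IsStarEdgeColoring G C)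
    {a b c d c' d' : V} (hab : G.Adj a b) (hbc : G.Adj b c) (hcd : G.Adj c d) (hda : G.Adj d a)
    (hac : a ≠ c) (hbd : b ≠ d) (hcc' : G.Adj c c') (hbc' : b ≠ c') (hdc' : d ≠ c')
    (hdd' : G.Adj d d') (hcd' : c ≠ d') (had' : a ≠ d') : 4 ≤ k := by
  obtain ⟨hp, halt⟩ := isStarEdgeColoring_iff.1 hC
  have := hp hab hbc hac
  have := hp hbc hcd hbd
  have := hp hcd hda hac.symm
  have := hp hda hab hbd.symm
  have := hp hbc hcc' hbc'
  have := hp hcd.symm hcc' hdc'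
  have := hp hcd hdd' hcd'
  have := hp hda.symm hdd' had'
  have := halt hab hbc hac hcd hbd hda hac.symm
  have := halt hab.symm hda.symm hbd hcd.symm hac hcc' hdc'
  have := halt hbc.symm hab.symm hac.symm hda.symm hbd hdd' had'
  simp only [Sym2.eq_swap (a := b) (b := a), Sym2.eq_swap (a := c) (b := b),
    Sym2.eq_swap (a := d) (b := c), Sym2.eq_swap (a := a) (b := d)] at *
  by_contra! hk
  omega

theorem starChromaticIndex_eq (hex : ∃ C : Sym2 V → Fin k, IsStarEdgeColoring G C)
    (hle : ∀ j (C : Sym2 V → Fin j), IsStarEdgeColoring G C → k ≤ j) :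
    starChromaticIndex G = k :=
  le_antisymm (Nat.sInf_le hex) (le_csInf ⟨k, hex⟩ fun j ⟨C, hC⟩ => hle j C hC)

end Coloring

def cubeEdgeColoring : Sym2 (Fin 4 × Fin 2) → Fin 4 :=
  Sym2.lift ⟨fun x y =>
    if x.1 = y.1 then -x.1
    else if y.1 = x.1 + 1 then (if x.2 = 0 then 1 else 2) - x.1
    else if x.1 = y.1 + 1 then (if y.2 = 0 then 1 else 2) - y.1
    else 0, by decide⟩

set_option synthInstance.maxSize 2000 in
theorem isStarEdgeColoring_cube :
    IsStarEdgeColoring (cycleGraph 4 □ pathGraph 2) cubeEdgeColoring :=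
  IsProperEdgeColoring.isStarEdgeColoring (by unfold IsProperEdgeColoring; decide)
    (by unfold IsAlternatingFree; decide)

theorem exists_isStarEdgeColoring_prism {m : ℕ} (h : 4 ∣ m + 2) :
    ∃ C : Sym2 (Fin (m + 2) × Fin 2) → Fin 4,
      IsStarEdgeColoring (cycleGraph (m + 2) □ pathGraph 2) C :=
  ⟨_, isStarEdgeColoring_cube.comap
    ((isLocallyInjective_cycleGraphCover h (by decide)).boxProdMap Hom.isLocallyInjective_id)⟩

open Fin.CommRing in
theorem four_le_of_isStarEdgeColoring_prism {n k : ℕ} {C : Sym2 (Fin (n + 3) × Fin 2) → Fin k}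
    (hC : IsStarEdgeColoring (cycleGraph (n + 3) □ pathGraph 2) C) : 4 ≤ k := by
  have h₂ : (2 : Fin (n + 3)) ≠ 0 := by
    simp [Fin.ext_iff, Nat.mod_eq_of_lt (show 2 < n + 3 by omega)]
  have h₁ : (1 : Fin (n + 3)) ≠ -1 := fun h => h₂ (by linear_combination h)
  refine hC.four_le_of_square (a := (0, 0)) (b := (1, 0)) (c := (1, 1)) (d := (0, 1))
    (c' := (2, 1)) (d' := (-1, 1)) ?_ ?_ ?_ ?_ ?_ ?_ ?_ ?_ ?_ ?_ ?_ ?_ <;>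
  simp [boxProd_adj, cycleGraph_adj, pathGraph_adj, h₁, h₂.symm,
    show (2 : Fin (n + 3)) - 1 = 1 by ring]

theorem stmt_15 (m : ℕ) (hm : 3 ≤ m) (h4 : 4 ∣ m) :
    starChromaticIndex (cycleGraph m □ pathGraph 2) = 4 := by
  obtain ⟨n, rfl⟩ : ∃ n, m = n + 3 := ⟨m - 3, by omega⟩
  exact starChromaticIndex_eq (exists_isStarEdgeColoring_prism h4) fun _ _ =>
    four_le_of_isStarEdgeColoring_prism
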